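/- arXiv:2202.08601 — 2 statements merged into one kernel-verified Lean document; each statement's English description precedes it below -/
import Mathlib

section
/- Every 3-dimensional linear subspace V ⊆ ℂ⁶ on which both Σ_{k=0}^{5} x_k and Σ_{k=0}^{5} x_k³ vanish identically equals P_τ for a unique fixed-point-free involution τ of {0,…,5}. Equivalently, the Segre cubic Σ₃ contains exactly 15 planes, namely the Segre planes. -/
open scoped BigOperators

/-- A fixed-point-free involution of `{0,…,5}`. -/
def FPF (τ : Equiv.Perm (Fin 6)) : Prop :=
  (∀ i, τ (τ i) = i) ∧ ∀ i, τ i ≠ i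

/-- The linear subspace `P_τ = {x ∈ ℂ⁶ : x i + x (τ i) = 0 for all i}`. -/
noncomputable def segrePlane (τ : Equiv.Perm (Fin 6)) : Submodule ℂ (Fin 6 → ℂ) where
  carrier := {x | ∀ i, x i + x (τ i) = 0}
  add_mem' := by
    intro a b ha hb i
    simp only [Pi.add_apply]
    linear_combination ha i + hb i
  zero_mem' := by intro i; simp
  smul_mem' := by
    intro c x hx i
    simp only [Pi.smul_apply, smul_eq_mul]
    linear_combination c * hx i

/-!
A plane `V` in the Segre cubic projects isomorphically onto three of the six coordinates, so
after reordering the coordinates it is the graph `{(s, A s)}` of a `3 × 3` matrix `A`. On the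
slice `s = r e_c + t (e_{c+1} - e_{c+2})` the cubic becomes a sum of four cubes of binary forms
`r, x, y, z` adding up to zero, so `r³ + x³ + y³ + z³ = 3 (r + x) (r + y) (r + z)` vanishes and
one of `x, y, z` is `-r`. This singles out, for each column `c`, a row of `A` with entry `-1` at
`c` and equal entries elsewhere. Distinct columns get distinct rows (a row of `-1`s contradicts
the cubic at `s = (1, 1, 1)`), and the column sums `-1` then force `A = -(permutation matrix)`,
i.e. `V` is a Segre plane.
-/

open Module Matrix

theorem cube_add_sum_cube_eq_mul_prod {R : Type*} [CommRing R] {r : R} {x : Fin 3 → R}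
    (h : r + ∑ m, x m = 0) : r ^ 3 + ∑ m, x m ^ 3 = 3 * ∏ m, (r + x m) := by
  simp only [Fin.sum_univ_three, Fin.prod_univ_three] at *
  linear_combination ((r + x 0 + x 1 + x 2) ^ 2 - 3 * (r * (x 0 + x 1 + x 2)
    + x 0 * x 1 + x 1 * x 2 + x 0 * x 2) - 3 * r ^ 2) * h

theorem exists_eq_zero_of_prod_linear_eq_zero {K ι : Type*} [Field K] [Infinite K] [Fintype ι]
    (a b : ι → K) (h : ∀ x y : K, ∏ i, (a i * x + b i * y) = 0) : ∃ i, a i = 0 ∧ b i = 0 := by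
  have hP : ∏ i, (Polynomial.C (a i) * Polynomial.X + Polynomial.C (b i)) = 0 :=
    Polynomial.funext fun z => by simpa [Polynomial.eval_prod] using h z 1
  obtain ⟨i, -, hi⟩ := Finset.prod_eq_zero_iff.mp hP
  exact ⟨i, by simpa using congrArg (Polynomial.coeff · 1) hi,
    by simpa using congrArg (Polynomial.coeff · 0) hi⟩

theorem exists_eq_neg_one_of_cube_add_sum_cube {K : Type*} [Field K] [CharZero K]
    {α β : Fin 3 → K} (hα : ∑ m, α m = -1) (hβ : ∑ m, β m = 0)
    (h : ∀ r t : K, r ^ 3 + ∑ m, (r * α m + t * β m) ^ 3 = 0) : ∃ m, α m = -1 ∧ β m = 0 := by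
  obtain ⟨m, hm, hβm⟩ := exists_eq_zero_of_prod_linear_eq_zero (fun m => 1 + α m) β fun r t => by
    have hsum : r + ∑ m, (r * α m + t * β m) = 0 := by
      rw [Finset.sum_add_distrib, ← Finset.mul_sum, ← Finset.mul_sum, hα, hβ]
      ring
    have h3 := (cube_add_sum_cube_eq_mul_prod hsum).symm.trans (h r t)
    calc ∏ m, ((1 + α m) * r + β m * t) = ∏ m, (r + (r * α m + t * β m)) :=
          Finset.prod_congr rfl fun m _ => by ring
      _ = 0 := (mul_eq_zero.mp h3).resolve_left three_ne_zero
  exact ⟨m, by linear_combination hm, hβm⟩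

def GraphInSegreCubic {K : Type*} [Field K] (A : Matrix (Fin 3) (Fin 3) K) : Prop :=
  (∀ s, ∑ c, s c + ∑ m, (A *ᵥ s) m = 0) ∧ ∀ s, ∑ c, s c ^ 3 + ∑ m, (A *ᵥ s) m ^ 3 = 0

namespace GraphInSegreCubic

variable {K : Type*} [Field K] {A : Matrix (Fin 3) (Fin 3) K}

theorem sum_col (hA : GraphInSegreCubic A) (c : Fin 3) : ∑ m, A m c = -1 := by
  have := hA.1 (Pi.single c 1)
  simp only [Finset.sum_pi_single', Finset.mem_univ, if_true, mulVec_single_one, col_apply]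
    at this
  linear_combination this

theorem exists_row [CharZero K] (hA : GraphInSegreCubic A) (c : Fin 3) :
    ∃ m, A m c = -1 ∧ A m (c + 1) = A m (c + 2) := by
  obtain ⟨m, h1, h2⟩ := exists_eq_neg_one_of_cube_add_sum_cube (α := fun m => A m c)
    (β := fun m => A m (c + 1) - A m (c + 2)) (hA.sum_col c)
    (by simp [Finset.sum_sub_distrib, hA.sum_col]) fun r t => by
      let s : Fin 3 → K := r • Pi.single c 1 + t • (Pi.single (c + 1) 1 - Pi.single (c + 2) 1)
      have hs : ∑ j, s j ^ 3 = r ^ 3 := by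
        fin_cases c <;> simp [s, Fin.sum_univ_three, Odd.neg_pow (by decide : Odd 3)]
      have := hA.2 s
      rw [hs] at this
      simpa only [s, mulVec_add, mulVec_smul, mulVec_sub, mulVec_single_one, Pi.add_apply,
        Pi.smul_apply, Pi.sub_apply, col_apply, smul_eq_mul] using this
  exact ⟨m, h1, sub_eq_zero.mp h2⟩

theorem exists_ne_neg_one [CharZero K] (hA : GraphInSegreCubic A) (m : Fin 3) :
    ∃ c, A m c ≠ -1 := by
  by_contra! hm
  have h1 := hA.1 1
  have h3 := hA.2 1
  have hy : (A *ᵥ 1) m = -3 := by simp [mulVec, dotProduct, hm]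
  simp only [Pi.one_apply, Fin.sum_univ_three] at h1 h3
  -- the other two row sums cancel, hence so do their cubes, leaving `3 - 27 = 0`
  fin_cases m <;> simp only [Fin.zero_eta, Fin.mk_one, Fin.reduceFinMk, Fin.isValue] at hy <;>
    grind

theorem exists_perm [CharZero K] (hA : GraphInSegreCubic A) :
    ∃ σ : Equiv.Perm (Fin 3), ∀ s c, (A *ᵥ s) (σ c) = -s c := by
  choose f hf using hA.exists_row
  have hinj : Function.Injective f := by
    intro c d hcd
    by_contra hne
    obtain ⟨j, hj⟩ := hA.exists_ne_neg_one (f c)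
    obtain ⟨hc, hc'⟩ := hf c
    obtain ⟨hd, -⟩ := hf d
    rw [← hcd] at hd
    have hjc : j ≠ c := fun h => hj (h ▸ hc)
    have hjd : j ≠ d := fun h => hj (h ▸ hd)
    have : ∀ c d j : Fin 3, c ≠ d → j ≠ c → j ≠ d →
        (d = c + 1 ∧ j = c + 2) ∨ (d = c + 2 ∧ j = c + 1) := by decide
    rcases this c d j hne hjc hjd with ⟨rfl, rfl⟩ | ⟨rfl, rfl⟩
    · exact hj (hc' ▸ hd)
    · exact hj (hc'.symm ▸ hd)
  let σ := Equiv.ofBijective f hinj.bijective_of_finite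
  have hcol : ∀ j, ∑ c, A (f c) j = -1 := fun j =>
    (Equiv.sum_comp σ (fun m => A m j)).trans (hA.sum_col j)
  have hfA : ∀ c j, A (f c) j = if j = c then -1 else 0 := by
    -- row `f c` is `-1` at `c` and some `a c` elsewhere; the column sums give `a c + a d = 0`
    have h0 := hf 0; have h1 := hf 1; have h2 := hf 2
    have s0 := hcol 0; have s1 := hcol 1; have s2 := hcol 2
    simp only [Fin.sum_univ_three, Fin.isValue, Fin.reduceAdd] at h0 h1 h2 s0 s1 s2
    intro c j
    fin_cases c <;> fin_cases j <;>
      simp only [Fin.zero_eta, Fin.mk_one, Fin.reduceFinMk, Fin.isValue, Fin.reduceEq,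
        zero_ne_one, one_ne_zero, ↓reduceIte] <;> grind
  exact ⟨σ, fun s c => by simp [σ, mulVec, dotProduct, hfA]⟩

end GraphInSegreCubic

theorem exists_pivots_of_finrank_eq {K ι : Type*} [Field K] [Fintype ι]
    {V : Submodule K (ι → K)} {n : ℕ} (hn : finrank K V = n) :
    ∃ a : Fin n → ι, Function.Injective a ∧ ∀ x ∈ V, (∀ c, x (a c) = 0) → x = 0 := by
  classical
  let ℓ : ι → Module.Dual K V := fun k => (LinearMap.proj k).comp V.subtype
  obtain ⟨κ, a, ha, hspan, hli⟩ := exists_linearIndependent' K ℓ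
  have : Fintype κ := Fintype.ofInjective a ha
  have hpiv : ∀ x ∈ V, (∀ c, x (a c) = 0) → x = 0 := by
    intro x hx h0
    have hker : Submodule.span K (Set.range ℓ) ≤ LinearMap.ker (Module.Dual.eval K V ⟨x, hx⟩) := by
      rw [← hspan, Submodule.span_le]
      rintro _ ⟨c, rfl⟩
      simp [ℓ, h0]
    funext k
    simpa [ℓ] using hker (Submodule.subset_span ⟨k, rfl⟩)
  have hcard : Fintype.card κ = n := by
    refine le_antisymm (hn ▸ hli.fintype_card_le_finrank.trans Subspace.dual_finrank_eq.le) ?_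
    have hinj : Function.Injective ((LinearMap.funLeft K K a).comp V.subtype) := by
      rw [← LinearMap.ker_eq_bot, LinearMap.ker_eq_bot']
      exact fun x hx => Subtype.ext (hpiv x x.2 (congrFun hx))
    simpa [hn] using LinearMap.finrank_le_finrank_of_injective hinj
  let eκ : Fin n ≃ κ := (Fintype.equivFinOfCardEq hcard).symm
  exact ⟨a ∘ eκ, ha.comp eκ.injective, fun x hx h0 => hpiv x hx fun c => by
    simpa using h0 (eκ.symm c)⟩

theorem exists_sumEquiv_inl_eq {α : Type*} [Fintype α] {m n : ℕ} (a : Fin m → α)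
    (ha : Function.Injective a) (hcard : Fintype.card α = m + n) :
    ∃ e : Fin m ⊕ Fin n ≃ α, ∀ c, e (.inl c) = a c := by
  classical
  have : Fintype.card ↥(Set.range a)ᶜ = n := by
    rw [Fintype.card_compl_set, Set.card_range_of_injective ha, hcard]
    simp
  exact ⟨(Equiv.sumCongr (Equiv.ofInjective a ha) (Fintype.equivFinOfCardEq this).symm).trans
    (Equiv.Set.sumCompl _), fun c => by simp⟩

theorem sum_pow_eq_zero_of_mem_segrePlane {τ : Equiv.Perm (Fin 6)} {x : Fin 6 → ℂ}
    (hx : x ∈ segrePlane τ) {n : ℕ} (hn : Odd n) : ∑ k, x k ^ n = 0 := by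
  have h : ∑ k, x k ^ n = -∑ k, x k ^ n := calc
    ∑ k, x k ^ n = ∑ k, x (τ k) ^ n := (Equiv.sum_comp τ (fun k => x k ^ n)).symm
    _ = -∑ k, x k ^ n := by
      rw [← Finset.sum_neg_distrib]
      refine Finset.sum_congr rfl fun k _ => ?_
      rw [eq_neg_of_add_eq_zero_right (hx k), hn.neg_pow]
  linear_combination h / 2

theorem finrank_segrePlane {τ : Equiv.Perm (Fin 6)} (hτ : FPF τ) :
    finrank ℂ (segrePlane τ) = 3 := by
  let π : (Fin 6 → ℂ) →ₗ[ℂ] (Fin 6 → ℂ) := (2⁻¹ : ℂ) • (LinearMap.id - LinearMap.funLeft ℂ ℂ τ)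
  have hπ : LinearMap.IsProj (segrePlane τ) π := by
    constructor
    · intro x i
      simp only [π, LinearMap.funLeft, LinearMap.smul_apply, LinearMap.sub_apply, LinearMap.id_coe,
        id_eq, LinearMap.coe_mk, AddHom.coe_mk, Pi.smul_apply, Pi.sub_apply, Function.comp_apply,
        smul_eq_mul, hτ.1 i]
      ring
    · intro x hx
      funext i
      simp only [π, LinearMap.funLeft, LinearMap.smul_apply, LinearMap.sub_apply, LinearMap.id_coe,
        id_eq, LinearMap.coe_mk, AddHom.coe_mk, Pi.smul_apply, Pi.sub_apply, Function.comp_apply,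
        smul_eq_mul]
      linear_combination (-2⁻¹ : ℂ) * hx i
  -- the diagonal entries of `π` are all `1/2` because `τ` has no fixed points
  have htrace : LinearMap.trace ℂ _ π = 3 := by
    rw [LinearMap.trace_eq_matrix_trace ℂ (Pi.basisFun ℂ (Fin 6)), LinearMap.toMatrix_eq_toMatrix',
      Matrix.trace]
    norm_num [π, LinearMap.funLeft, LinearMap.toMatrix'_apply, hτ.2]
  exact_mod_cast hπ.trace.symm.trans htrace

theorem segrePlane_le_segrePlane_iff {τ τ' : Equiv.Perm (Fin 6)} (hτ : FPF τ) :
    segrePlane τ ≤ segrePlane τ' ↔ τ' = τ := by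
  refine ⟨fun hle => Equiv.ext fun i => ?_, fun h => h ▸ le_rfl⟩
  have hτi : ∀ j, τ j = i ↔ j = τ i := fun j => ⟨fun h => h ▸ (hτ.1 j).symm, fun h => h ▸ hτ.1 i⟩
  have hx : Pi.single i 1 - Pi.single (τ i) 1 ∈ segrePlane τ := fun j => by
    simp only [Pi.sub_apply, Pi.single_apply, hτi, τ.apply_eq_iff_eq]
    split_ifs <;> ring
  by_contra hne
  have hxi := hle hx i
  simp only [Pi.sub_apply, Pi.single_apply, if_neg (hτ.2 i).symm, if_neg hne, if_true,
    sub_zero] at hxi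
  split_ifs at hxi <;> norm_num at hxi

/-- The matching of `ι ⊕ ι` that joins `inl c` to `inr (σ c)`. -/
def sumPairing {ι : Type*} (σ : Equiv.Perm ι) : Equiv.Perm (ι ⊕ ι) :=
  (Equiv.sumCongr σ σ.symm).trans (Equiv.sumComm ι ι)

theorem fpf_permCongr_sumPairing {ι : Type*} (e : ι ⊕ ι ≃ Fin 6) (σ : Equiv.Perm ι) :
    FPF (e.permCongr (sumPairing σ)) := by
  refine ⟨fun i => ?_, fun i => ?_⟩ <;> obtain ⟨c | c, rfl⟩ := e.surjective i <;>
    simp [sumPairing]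

theorem mem_segrePlane_permCongr_sumPairing {ι : Type*} {e : ι ⊕ ι ≃ Fin 6}
    {σ : Equiv.Perm ι} {x : Fin 6 → ℂ} :
    x ∈ segrePlane (e.permCongr (sumPairing σ)) ↔
      ∀ c, x (e (.inl c)) + x (e (.inr (σ c))) = 0 := by
  refine ⟨fun hx c => by simpa [sumPairing] using hx (e (.inl c)), fun hx i => ?_⟩
  obtain ⟨c | c, rfl⟩ := e.surjective i
  · simpa [sumPairing] using hx c
  · simpa [sumPairing, add_comm] using hx (σ.symm c)

theorem exists_perm_of_pivots {V : Submodule ℂ (Fin 6 → ℂ)} (hr : finrank ℂ V = 3)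
    (hV : ∀ x ∈ V, (∑ k, x k) = 0 ∧ (∑ k, (x k) ^ 3) = 0) (e : Fin 3 ⊕ Fin 3 ≃ Fin 6)
    (hpiv : ∀ x ∈ V, (∀ c, x (e (.inl c)) = 0) → x = 0) :
    ∃ σ : Equiv.Perm (Fin 3), ∀ x ∈ V, ∀ c, x (e (.inl c)) + x (e (.inr (σ c))) = 0 := by
  let π : V →ₗ[ℂ] (Fin 3 → ℂ) := LinearMap.funLeft ℂ ℂ (e ∘ .inl) ∘ₗ V.subtype
  have hπ : Function.Bijective π := by
    have hinj : Function.Injective π := by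
      rw [← LinearMap.ker_eq_bot, LinearMap.ker_eq_bot']
      exact fun x hx => Subtype.ext (hpiv x x.2 (congrFun hx))
    exact ⟨hinj, (LinearMap.injective_iff_surjective_of_finrank_eq_finrank (by simp [hr])).mp hinj⟩
  let g := LinearEquiv.ofBijective π hπ
  let A := LinearMap.toMatrix'
    (LinearMap.funLeft ℂ ℂ (e ∘ .inr) ∘ₗ V.subtype ∘ₗ g.symm.toLinearMap)
  have hA : ∀ x : V, A *ᵥ π x = fun m => (x : Fin 6 → ℂ) (e (.inr m)) := fun x => by
    simp only [A, LinearMap.toMatrix'_mulVec, LinearMap.coe_comp, Function.comp_apply,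
      LinearEquiv.coe_coe, show g.symm (π x) = x from g.symm_apply_apply x]
    rfl
  have hsplit : ∀ (x : V) (n : ℕ),
      ∑ k, (x : Fin 6 → ℂ) k ^ n = ∑ c, π x c ^ n + ∑ m, (A *ᵥ π x) m ^ n := fun x n => by
    rw [hA, ← e.sum_comp, Fintype.sum_sum_type]
    rfl
  have hgraph : GraphInSegreCubic A := by
    refine ⟨fun s => ?_, fun s => ?_⟩ <;> obtain ⟨x, rfl⟩ := hπ.2 s
    · have h1 := hsplit x 1
      simp only [pow_one] at h1
      exact h1 ▸ (hV x x.2).1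
    · exact (hsplit x 3).symm.trans (hV x x.2).2
  obtain ⟨σ, hσ⟩ := hgraph.exists_perm
  refine ⟨σ, fun x hx c => ?_⟩
  have := congrFun (hA ⟨x, hx⟩) (σ c)
  rw [hσ] at this
  simp only [π, LinearMap.coe_comp, Function.comp_apply, LinearMap.funLeft_apply,
    Submodule.subtype_apply] at this
  linear_combination -this

theorem exists_fpf_eq_segrePlane {V : Submodule ℂ (Fin 6 → ℂ)} (hr : finrank ℂ V = 3)
    (hV : ∀ x ∈ V, (∑ k, x k) = 0 ∧ (∑ k, (x k) ^ 3) = 0) :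
    ∃ τ, FPF τ ∧ V = segrePlane τ := by
  obtain ⟨a, ha, hpiv⟩ := exists_pivots_of_finrank_eq hr
  obtain ⟨e, he⟩ := exists_sumEquiv_inl_eq a ha (by simp : Fintype.card (Fin 6) = 3 + 3)
  obtain ⟨σ, hσ⟩ := exists_perm_of_pivots hr hV e fun x hx h0 => hpiv x hx fun c => he c ▸ h0 c
  have hτ := fpf_permCongr_sumPairing e σ
  refine ⟨_, hτ, Submodule.eq_of_le_of_finrank_le
    (fun x hx => mem_segrePlane_permCongr_sumPairing.mpr (hσ x hx)) ?_⟩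
  rw [hr, finrank_segrePlane hτ]

theorem ncard_setOf_fpf : {τ : Equiv.Perm (Fin 6) | FPF τ}.ncard = 15 := by
  rw [show {τ | FPF τ} = ↑(Finset.univ.filter
      fun τ : Equiv.Perm (Fin 6) => (∀ i, τ (τ i) = i) ∧ ∀ i, τ i ≠ i) by ext; simp [FPF],
    Set.ncard_coe_finset]
  decide

theorem setOf_planes_in_segreCubic_eq_image :
    {V : Submodule ℂ (Fin 6 → ℂ) | finrank ℂ V = 3 ∧
      ∀ x ∈ V, (∑ k, x k) = 0 ∧ (∑ k, (x k) ^ 3) = 0} = segrePlane '' {τ | FPF τ} := by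
  ext V
  constructor
  · rintro ⟨hr, hV⟩
    obtain ⟨τ, hτ, rfl⟩ := exists_fpf_eq_segrePlane hr hV
    exact ⟨τ, hτ, rfl⟩
  · rintro ⟨τ, hτ, rfl⟩
    refine ⟨finrank_segrePlane hτ, fun x hx => ⟨?_, ?_⟩⟩
    · simpa using sum_pow_eq_zero_of_mem_segrePlane hx odd_one
    · exact sum_pow_eq_zero_of_mem_segrePlane hx (by decide)

/-- Every 3-dimensional linear subspace of `ℂ⁶` on which `∑ x_k` and
`∑ x_k³` vanish identically is `P_τ` for a unique fixed-point-free involution `τ`;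
equivalently, the Segre cubic contains exactly 15 planes, the Segre planes. -/
theorem segre_cubic_planes_classification :
    (∀ V : Submodule ℂ (Fin 6 → ℂ), Module.finrank ℂ V = 3 →
      (∀ x ∈ V, (∑ k, x k) = 0 ∧ (∑ k, (x k) ^ 3) = 0) →
      ∃! τ : Equiv.Perm (Fin 6), FPF τ ∧ V = segrePlane τ) ∧
    {V : Submodule ℂ (Fin 6 → ℂ) | Module.finrank ℂ V = 3 ∧
      ∀ x ∈ V, (∑ k, x k) = 0 ∧ (∑ k, (x k) ^ 3) = 0}.ncard = 15 := by
  refine ⟨fun V hr hV => ?_, ?_⟩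
  · obtain ⟨τ, hτ, rfl⟩ := exists_fpf_eq_segrePlane hr hV
    exact ⟨τ, ⟨hτ, rfl⟩, fun τ' ⟨_, h⟩ => (segrePlane_le_segrePlane_iff hτ).mp h.le⟩
  · have hinj : Set.InjOn segrePlane {τ | FPF τ} := fun τ hτ τ' _ h =>
      ((segrePlane_le_segrePlane_iff hτ).mp h.le).symm
    rw [setOf_planes_in_segreCubic_eq_image, hinj.ncard_image, ncard_setOf_fpf]
end

section
/- Let i ≠ j in {0,…,5}. Consider the cubic surface Σ₃ ∩ {[x] : x_i = x_j} (the Cayley cubic). The points [x] of this surface at which the vector (x₀²,…,x₅²) lies in the span of (1,…,1) and e_i − e_j (the Jacobian criterion for singularity of the surface) are exactly the nodes [ε^A] with ε^A_i = ε^A_j; in particular this cubic surface has exactly 4 singular points. -/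
open scoped BigOperators

/-- The vector `ε^A` with coordinate `1` on `A` and `-1` off `A`. -/
noncomputable def eps (A : Finset (Fin 6)) : Fin 6 → ℂ := fun k => if k ∈ A then 1 else -1

lemma eps_ne_zero (A : Finset (Fin 6)) : eps A ≠ 0 := by
  intro h
  have h0 := congrFun h 0
  simp only [eps, Pi.zero_apply] at h0
  split_ifs at h0 <;> norm_num at h0

lemma eps_sq (A : Finset (Fin 6)) (k : Fin 6) : (eps A k) ^ 2 = 1 := by
  simp only [eps]; split_ifs <;> ring

lemma eps_cube (A : Finset (Fin 6)) (k : Fin 6) : (eps A k) ^ 3 = eps A k := by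
  simp only [eps]; split_ifs <;> ring

lemma eps_compl (A : Finset (Fin 6)) : eps Aᶜ = -eps A := by
  funext k
  simp only [eps, Finset.mem_compl, Pi.neg_apply]
  split_ifs <;> simp_all

lemma sum_eps (A : Finset (Fin 6)) : ∑ k, eps A k = 2 * (A.card : ℂ) - 6 := by
  have h : ∀ k, eps A k = 2 * (if k ∈ A then (1:ℂ) else 0) - 1 := by
    intro k; simp only [eps]; split_ifs <;> ring
  rw [Finset.sum_congr rfl fun k _ => h k, Finset.sum_sub_distrib, ← Finset.mul_sum,
    Finset.sum_boole]
  simp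

lemma sum_eps_three (A : Finset (Fin 6)) (h : A.card = 3) : ∑ k, eps A k = 0 := by
  rw [sum_eps, h]; norm_num

lemma epsForward (i j : Fin 6) (hij : i ≠ j) (x : Fin 6 → ℂ) (hx : x ≠ 0)
    (h1 : (∑ k, x k) = 0) (hxij : x i = x j) {a b : ℂ}
    (hab : (fun k => (x k) ^ 2) =
      a • (1 : Fin 6 → ℂ) + b • (Pi.single i (1 : ℂ) - Pi.single j 1)) :
    ∃ (A : Finset (Fin 6)) (c : ℂ), A.card = 3 ∧ eps A i = eps A j ∧ c ≠ 0 ∧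
      x = c • eps A := by
  classical
  have hxi : x i ^ 2 = a + b := by
    have := congrFun hab i
    simpa [Pi.single_apply, hij, Ne.symm hij] using this
  have hxj : x j ^ 2 = a - b := by
    have := congrFun hab j
    simp [Pi.single_apply, hij, Ne.symm hij] at this
    linear_combination this
  have hb : b = 0 := by
    have h' : a + b = a - b := by rw [← hxi, ← hxj, hxij]
    linear_combination h' / 2
  have ha : ∀ k, x k ^ 2 = a := by
    intro k
    have := congrFun hab k
    simp only [Pi.add_apply, Pi.smul_apply, Pi.one_apply, smul_eq_mul, Pi.sub_apply, hb] at this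
    simpa using this
  have ha0 : a ≠ 0 := by
    intro h0
    apply hx
    funext k
    have hk := ha k
    rw [h0] at hk
    exact pow_eq_zero_iff (two_ne_zero) |>.mp hk
  obtain ⟨c, hc⟩ := IsAlgClosed.exists_pow_nat_eq a (n := 2) (by norm_num)
  have hc0 : c ≠ 0 := by rintro rfl; rw [← hc] at ha0; simp at ha0
  set A := Finset.univ.filter (fun k => x k = c) with hA
  have hxk : ∀ k, x k = c ∨ x k = -c := by
    intro k
    have h2 : (x k - c) * (x k + c) = 0 := by
      linear_combination (ha k) - hc
    rcases mul_eq_zero.mp h2 with h | h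
    · exact Or.inl (sub_eq_zero.mp h)
    · exact Or.inr (eq_neg_of_add_eq_zero_left h)
  have hxe : x = c • eps A := by
    funext k
    by_cases hk : x k = c
    · simp [hA, eps, hk]
    · rcases hxk k with h | h
      · exact absurd h hk
      · have hkA : k ∉ A := by simp [hA, hk]
        simp only [Pi.smul_apply, eps, if_neg hkA, smul_eq_mul, mul_neg_one, h]
  have hcard : A.card = 3 := by
    have hs : (0:ℂ) = c * (2 * (A.card:ℂ) - 6) := by
      rw [← h1, hxe]
      simp only [Pi.smul_apply, smul_eq_mul]
      rw [← Finset.mul_sum, sum_eps]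
    have h6 := (mul_eq_zero.mp hs.symm).resolve_left hc0
    have h3 : (A.card : ℂ) = 3 := by linear_combination h6 / 2
    exact_mod_cast h3
  have heps : eps A i = eps A j := by
    have hcc : c * eps A i = c * eps A j := by
      have hi := congrFun hxe i
      have hj := congrFun hxe j
      simp only [Pi.smul_apply, smul_eq_mul] at hi hj
      rw [← hi, ← hj, hxij]
    exact mul_left_cancel₀ hc0 hcc
  exact ⟨A, c, hcard, heps, hc0, hxe⟩

lemma extractThird (i j : Fin 6) (hij : i ≠ j) (A : Finset (Fin 6)) (hA : A.card = 3)
    (hi : i ∈ A) (hj : j ∈ A) :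
    ∃ k, k ≠ i ∧ k ≠ j ∧ A = insert i (insert j {k}) := by
  classical
  have hsub : ({i, j} : Finset (Fin 6)) ⊆ A := by
    intro t ht
    simp only [Finset.mem_insert, Finset.mem_singleton] at ht
    rcases ht with rfl | rfl <;> assumption
  have hc2 : ({i, j} : Finset (Fin 6)).card = 2 := by
    rw [Finset.card_insert_of_notMem (by simp [hij]), Finset.card_singleton]
  have hc1 : (A \ {i, j}).card = 1 := by
    rw [Finset.card_sdiff_of_subset hsub, hA, hc2]
  obtain ⟨k, hk⟩ := Finset.card_eq_one.mp hc1
  have hkmem : k ∈ A \ ({i, j} : Finset (Fin 6)) := by rw [hk]; simp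
  simp only [Finset.mem_sdiff, Finset.mem_insert, Finset.mem_singleton, not_or] at hkmem
  refine ⟨k, hkmem.2.1, hkmem.2.2, ?_⟩
  have := Finset.union_sdiff_of_subset hsub
  rw [hk] at this
  rw [← this]
  ext t
  simp only [Finset.mem_union, Finset.mem_insert, Finset.mem_singleton]
  tauto

lemma mk_eps_congr {A B : Finset (Fin 6)} (h : A = B) :
    Projectivization.mk ℂ (eps A) (eps_ne_zero A) =
      Projectivization.mk ℂ (eps B) (eps_ne_zero B) := by
  subst h; rfl

lemma nodeMem (i j : Fin 6) (A : Finset (Fin 6)) (hA : A.card = 3)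
    (hAij : eps A i = eps A j) :
    Projectivization.mk ℂ (eps A) (eps_ne_zero A) ∈
      {p : Projectivization ℂ (Fin 6 → ℂ) |
        ∃ (x : Fin 6 → ℂ) (hx : x ≠ 0), p = Projectivization.mk ℂ x hx ∧
          (∑ k, x k) = 0 ∧ (∑ k, (x k) ^ 3) = 0 ∧ x i = x j ∧
          ∃ a b : ℂ, (fun k => (x k) ^ 2) =
            a • (1 : Fin 6 → ℂ) + b • (Pi.single i (1 : ℂ) - Pi.single j 1)} := by
  refine ⟨eps A, eps_ne_zero A, rfl, sum_eps_three A hA, ?_, hAij, 1, 0, ?_⟩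
  · calc ∑ k, (eps A k) ^ 3 = ∑ k, eps A k := Finset.sum_congr rfl fun k _ => eps_cube A k
      _ = 0 := sum_eps_three A hA
  · funext k
    simp [eps_sq]

/-- on the Cayley cubic surface `Σ₃ ∩ {x_i = x_j}`, the points at which
`(x₀²,…,x₅²)` lies in the span of `(1,…,1)` and `e_i - e_j` (Jacobian criterion) are
exactly the nodes `[ε^A]` with `ε^A i = ε^A j`; in particular this cubic surface has
exactly 4 singular points. -/
theorem cayley_cubic_singular_points (i j : Fin 6) (hij : i ≠ j) :
    (∀ x : Fin 6 → ℂ, x ≠ 0 → (∑ k, x k) = 0 → (∑ k, (x k) ^ 3) = 0 → x i = x j →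
      ((∃ a b : ℂ, (fun k => (x k) ^ 2) =
          a • (1 : Fin 6 → ℂ) + b • (Pi.single i (1 : ℂ) - Pi.single j 1)) ↔
        ∃ (A : Finset (Fin 6)) (c : ℂ), A.card = 3 ∧ eps A i = eps A j ∧ c ≠ 0 ∧
          x = c • eps A)) ∧
    {p : Projectivization ℂ (Fin 6 → ℂ) |
      ∃ (x : Fin 6 → ℂ) (hx : x ≠ 0), p = Projectivization.mk ℂ x hx ∧
        (∑ k, x k) = 0 ∧ (∑ k, (x k) ^ 3) = 0 ∧ x i = x j ∧
        ∃ a b : ℂ, (fun k => (x k) ^ 2) =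
          a • (1 : Fin 6 → ℂ) + b • (Pi.single i (1 : ℂ) - Pi.single j 1)}.ncard = 4 := by
  classical
  constructor
  · intro x hx h1 h2 hxij
    constructor
    · rintro ⟨a, b, hab⟩
      exact epsForward i j hij x hx h1 hxij hab
    · rintro ⟨A, c, hA, hAij, hc0, rfl⟩
      refine ⟨c ^ 2, 0, ?_⟩
      funext k
      simp [mul_pow, eps_sq A k]
  · -- the set equals the image of {i,j}ᶜ under k ↦ mk (eps {i,j,k})
    have hset : {p : Projectivization ℂ (Fin 6 → ℂ) |
        ∃ (x : Fin 6 → ℂ) (hx : x ≠ 0), p = Projectivization.mk ℂ x hx ∧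
          (∑ k, x k) = 0 ∧ (∑ k, (x k) ^ 3) = 0 ∧ x i = x j ∧
          ∃ a b : ℂ, (fun k => (x k) ^ 2) =
            a • (1 : Fin 6 → ℂ) + b • (Pi.single i (1 : ℂ) - Pi.single j 1)} =
        (fun k => Projectivization.mk ℂ (eps (insert i (insert j {k})))
            (eps_ne_zero _)) '' ((({i, j} : Finset (Fin 6))ᶜ : Finset (Fin 6)) : Set (Fin 6)) := by
      ext p
      constructor
      · rintro ⟨x, hx, rfl, h1, h2, hxij, a, b, hab⟩
        obtain ⟨A, c, hA, hAij, hc0, hxe⟩ := epsForward i j hij x hx h1 hxij hab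
        have hmkA : Projectivization.mk ℂ x hx =
            Projectivization.mk ℂ (eps A) (eps_ne_zero A) := by
          rw [Projectivization.mk_eq_mk_iff]
          exact ⟨Units.mk0 c hc0, hxe.symm⟩
        by_cases hi : i ∈ A
        · have hj : j ∈ A := by
            by_contra hj
            simp only [eps, hi, hj, if_true, if_false] at hAij
            norm_num at hAij
          obtain ⟨k, hki, hkj, hAeq⟩ := extractThird i j hij A hA hi hj
          refine ⟨k, by simp [hki, hkj], ?_⟩
          rw [hmkA]
          exact (mk_eps_congr hAeq).symm
        · have hj : j ∉ A := by
            intro hj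
            simp only [eps, hi, hj, if_true, if_false] at hAij
            norm_num at hAij
          have hB : Aᶜ.card = 3 := by
            rw [Finset.card_compl, hA]
            rfl
          have hiB : i ∈ Aᶜ := Finset.mem_compl.mpr hi
          have hjB : j ∈ Aᶜ := Finset.mem_compl.mpr hj
          obtain ⟨k, hki, hkj, hAeq⟩ := extractThird i j hij Aᶜ hB hiB hjB
          refine ⟨k, by simp [hki, hkj], ?_⟩
          have hmkB : Projectivization.mk ℂ (eps A) (eps_ne_zero A) =
              Projectivization.mk ℂ (eps Aᶜ) (eps_ne_zero Aᶜ) := by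
            rw [Projectivization.mk_eq_mk_iff]
            refine ⟨-1, ?_⟩
            rw [eps_compl]
            simp
          rw [hmkA, hmkB]
          exact (mk_eps_congr hAeq).symm
      · rintro ⟨k, hk, rfl⟩
        simp only [Finset.coe_compl, Set.mem_compl_iff, Finset.mem_coe, Finset.mem_insert,
          Finset.mem_singleton, not_or] at hk
        obtain ⟨hki, hkj⟩ := hk
        set A := insert i (insert j ({k} : Finset (Fin 6))) with hA
        have hiA : i ∈ A := by simp [hA]
        have hjA : j ∈ A := by simp [hA]
        have hcard : A.card = 3 := by
          rw [hA, Finset.card_insert_of_notMem (by simp [hij, Ne.symm hki]),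
            Finset.card_insert_of_notMem (by simp [Ne.symm hkj]), Finset.card_singleton]
        exact nodeMem i j A hcard (by simp [eps, hiA, hjA])
    rw [hset]
    rw [Set.ncard_image_of_injOn, Set.ncard_coe_finset, Finset.card_compl,
      Finset.card_insert_of_notMem (by simp [hij]), Finset.card_singleton]
    · rfl
    · intro k hk l hl hkl
      simp only [Finset.coe_compl, Set.mem_compl_iff, Finset.mem_coe, Finset.mem_insert,
        Finset.mem_singleton, not_or] at hk hl
      rw [Projectivization.mk_eq_mk_iff] at hkl
      obtain ⟨u, hu⟩ := hkl
      have hui := congrFun hu i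
      have huk := congrFun hu k
      simp [eps, Units.smul_def, hk.1, hk.2] at hui huk
      by_contra hne
      rw [if_neg hne, hui] at huk
      norm_num at huk
end
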